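/- arXiv:2205.04745 — 2 statements merged into one kernel-verified Lean document; each statement's English description precedes it below -/
import Mathlib

section
/- For all integers c ≥ 2 and n ≥ 1, the binomial coefficient satisfies C(c·n, n) > √(c / ((c−1)·2·π·n)) · (c^c / (c−1)^(c−1))^n · (1 − (c² − c + 1) / (12·c·(c−1)·n)). -/
/-!
Robbins' form of Stirling's formula,
`√(2πm) (m/e)^m e^{1/(12m+1)} ≤ m! ≤ √(2πm) (m/e)^m e^{1/(12m)}`, comes from the series for
`log s_m - log s_{m+1}` (`s` the Stirling sequence, tending to `√π`): the series is at most the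
telescoping difference of `1/(12m)` and at least its first term, which dominates
the telescoping difference of `1/(12m+1)`.

Bounding `(cn)!` below and `n!`, `((c-1)n)!` above turns `C(cn, n)` into the main term times
`e^{-x}`, `x = 1/(12n) + 1/(12(c-1)n) - 1/(12cn+1)`. The correction `y = (c²-c+1)/(12c(c-1)n)`
equals `1/(12n) + 1/(12(c-1)n) - 1/(12cn)`, so `x - y = 1/(12cn) - 1/(12cn+1)` is of order
`1/(cn)²`, while `xy ≥ y²` is of order `1/n²`; the Padé bound `e^{-x} ≥ (2-x)/(2+x)` turns
`2(x - y) < xy` into `1 - y < e^{-x}`.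
-/

open Real Filter Topology Nat Stirling

theorem le_add_of_sub_succ_le_of_tendsto {u g : ℕ → ℝ} {L : ℝ}
    (h : ∀ k, u k - u (k + 1) ≤ g k - g (k + 1))
    (hu : Tendsto u atTop (𝓝 L)) (hg : Tendsto g atTop (𝓝 0)) (k : ℕ) :
    u k ≤ L + g k := by
  have hmono : Monotone fun k => u k - g k := monotone_nat_of_le_succ fun k => by linarith [h k]
  linarith [hmono.ge_of_tendsto (by simpa using hu.sub hg) k]

theorem add_le_of_le_sub_succ_of_tendsto {u g : ℕ → ℝ} {L : ℝ}
    (h : ∀ k, g k - g (k + 1) ≤ u k - u (k + 1))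
    (hu : Tendsto u atTop (𝓝 L)) (hg : Tendsto g atTop (𝓝 0)) (k : ℕ) :
    L + g k ≤ u k := by
  linarith [le_add_of_sub_succ_le_of_tendsto (u := fun k => -u k) (g := fun k => -g k)
    (fun k => by linarith [h k]) hu.neg (by simpa using hg.neg) k]

theorem log_stirlingSeq_sdiff_ge (n : ℕ) :
    1 / (12 * ((n : ℝ) + 1) + 1) - 1 / (12 * ((n : ℝ) + 2) + 1) ≤
      log (stirlingSeq (n + 1)) - log (stirlingSeq (n + 2)) := by
  refine le_trans ?_ (le_hasSum (log_stirlingSeq_sdiff_hasSum n) 0 fun j _ => by positivity)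
  have : (0 : ℝ) ≤ n := n.cast_nonneg
  push_cast
  rw [div_sub_div _ _ (by positivity) (by positivity), div_le_iff₀ (by positivity)]
  field_simp
  nlinarith

theorem tendsto_log_stirlingSeq_succ :
    Tendsto (fun n : ℕ => log (stirlingSeq (n + 1))) atTop (𝓝 (log √π)) :=
  ((continuousAt_log (by positivity)).tendsto.comp tendsto_stirlingSeq_sqrt_pi).comp
    (tendsto_add_atTop_nat 1)

theorem tendsto_one_div_mul_add {a : ℝ} (ha : 0 < a) (b : ℝ) :
    Tendsto (fun n : ℕ => 1 / (a * ((n : ℝ) + 1) + b)) atTop (𝓝 0) := by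
  simp only [one_div]
  refine Tendsto.inv_tendsto_atTop (tendsto_atTop_add_const_right _ b
    (Tendsto.const_mul_atTop ha ?_))
  exact tendsto_atTop_add_const_right _ 1 tendsto_natCast_atTop_atTop

theorem stirlingSeq_le_sqrt_pi_mul_exp {n : ℕ} (hn : n ≠ 0) :
    stirlingSeq n ≤ √π * exp (1 / (12 * n)) := by
  obtain ⟨m, rfl⟩ := exists_eq_succ_of_ne_zero hn
  have := le_add_of_sub_succ_le_of_tendsto (g := fun k : ℕ => 1 / (12 * ((k : ℝ) + 1)))
    (fun k => ?_) tendsto_log_stirlingSeq_succ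
    (by simpa using tendsto_one_div_mul_add (a := 12) (by norm_num) 0) m
  · rw [← exp_le_exp, exp_log (stirlingSeq'_pos m), exp_add, exp_log (by positivity)] at this
    simpa using this
  · have := log_stirlingSeq_sdiff_le (k + 1)
    push_cast at this ⊢
    convert this using 1
    field_simp
    ring

theorem sqrt_pi_mul_exp_le_stirlingSeq {n : ℕ} (hn : n ≠ 0) :
    √π * exp (1 / (12 * n + 1)) ≤ stirlingSeq n := by
  obtain ⟨m, rfl⟩ := exists_eq_succ_of_ne_zero hn
  have := add_le_of_le_sub_succ_of_tendsto (g := fun k : ℕ => 1 / (12 * ((k : ℝ) + 1) + 1))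
    (fun k => ?_) tendsto_log_stirlingSeq_succ (tendsto_one_div_mul_add (by norm_num) 1) m
  · rw [← exp_le_exp, exp_log (stirlingSeq'_pos m), exp_add, exp_log (by positivity)] at this
    simpa using this
  · have := log_stirlingSeq_sdiff_ge k
    push_cast
    convert this using 3; ring

theorem factorial_eq_stirlingSeq_mul {n : ℕ} (hn : n ≠ 0) :
    (n ! : ℝ) = stirlingSeq n * (√(2 * n) * (n / exp 1) ^ n) := by
  rw [stirlingSeq, div_mul_cancel₀ _ (by positivity)]

theorem sqrt_two_mul_pi_mul_eq (n : ℕ) : √(2 * π * n) = √π * √(2 * n) := by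
  rw [mul_right_comm, sqrt_mul' _ (by positivity), mul_comm]

theorem factorial_le_stirling_mul_exp {n : ℕ} (hn : n ≠ 0) :
    (n ! : ℝ) ≤ √(2 * π * n) * (n / exp 1) ^ n * exp (1 / (12 * n)) :=
  calc (n ! : ℝ) = stirlingSeq n * (√(2 * n) * (n / exp 1) ^ n) :=
        factorial_eq_stirlingSeq_mul hn
    _ ≤ √π * exp (1 / (12 * n)) * (√(2 * n) * (n / exp 1) ^ n) := by
      gcongr; exact stirlingSeq_le_sqrt_pi_mul_exp hn
    _ = _ := by rw [sqrt_two_mul_pi_mul_eq]; ring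

theorem stirling_mul_exp_le_factorial {n : ℕ} (hn : n ≠ 0) :
    √(2 * π * n) * (n / exp 1) ^ n * exp (1 / (12 * n + 1)) ≤ n ! :=
  calc _ = √π * exp (1 / (12 * n + 1)) * (√(2 * n) * (n / exp 1) ^ n) := by
        rw [sqrt_two_mul_pi_mul_eq]; ring
    _ ≤ stirlingSeq n * (√(2 * n) * (n / exp 1) ^ n) := by
      gcongr; exact sqrt_pi_mul_exp_le_stirlingSeq hn
    _ = n ! := (factorial_eq_stirlingSeq_mul hn).symm

theorem robbins_lower_bound_le_add_choose {a b : ℕ} (ha : a ≠ 0) (hb : b ≠ 0) :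
    √((a + b) / (2 * π * a * b)) * ((a + b) ^ (a + b) / (a ^ a * b ^ b)) *
        exp (1 / (12 * (a + b) + 1) - 1 / (12 * a) - 1 / (12 * b)) ≤
      ((a + b).choose a : ℝ) := by
  have hsqrt :
      √((a + b) / (2 * π * a * b)) * √(2 * π * a) * √(2 * π * b) = √(2 * π * (a + b)) := by
    rw [← sqrt_mul (by positivity), ← sqrt_mul (by positivity)]
    congr 1
    field_simp
  have hpow : (a + b) ^ (a + b) / (a ^ a * b ^ b) * (a / exp 1) ^ a * (b / exp 1) ^ b =
      ((a + b : ℝ) / exp 1) ^ (a + b) := by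
    simp only [div_pow, pow_add]
    field_simp
  have hexp : exp (1 / (12 * (a + b) + 1) - 1 / (12 * a) - 1 / (12 * b)) *
      exp (1 / (12 * a)) * exp (1 / (12 * b)) = exp (1 / (12 * (a + b) + 1)) := by
    rw [← exp_add, ← exp_add]; ring_nf
  have hupper := mul_le_mul (factorial_le_stirling_mul_exp ha) (factorial_le_stirling_mul_exp hb)
    (by positivity) (by positivity)
  have hlower := stirling_mul_exp_le_factorial (n := a + b) (by omega)
  rw [cast_add_choose, le_div_iff₀ (by positivity)]
  calc _ ≤ _ := mul_le_mul_of_nonneg_left hupper (by positivity)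
    _ = √(2 * π * (a + b)) * ((a + b : ℝ) / exp 1) ^ (a + b) *
        exp (1 / (12 * (a + b) + 1)) := by
      rw [← hsqrt, ← hpow, ← hexp]; ring
    _ ≤ _ := by exact_mod_cast hlower

theorem one_sub_lt_exp_neg_of_two_mul_sub_lt {x y : ℝ} (hx : 0 ≤ x) (hx2 : x < 2)
    (h : 2 * (x - y) < x * y) :
    1 - y < exp (-x) := by
  have hpade : (2 - x) / (2 + x) ≤ exp (-x) :=
    calc (2 - x) / (2 + x) = ((2 + x) / (2 - x))⁻¹ := (inv_div _ _).symm
      _ ≤ (exp x)⁻¹ := inv_anti₀ (exp_pos x) (exp_le_two_add_div_two_sub hx hx2)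
      _ = exp (-x) := (exp_neg x).symm
  refine lt_of_lt_of_le ?_ hpade
  rw [lt_div_iff₀ (by linarith)]
  nlinarith

theorem one_sub_lt_exp_robbins_correction {k n : ℝ} (hk : 1 ≤ k) (hn : 1 ≤ n) :
    1 - ((k + 1) ^ 2 - (k + 1) + 1) / (12 * (k + 1) * k * n) <
      exp (1 / (12 * (n + k * n) + 1) - 1 / (12 * n) - 1 / (12 * (k * n))) := by
  set M := 12 * (k + 1) * n with hM
  have hM24 : 24 ≤ M := by nlinarith
  have hM0 : 0 < 2 / M := by positivity
  set y := ((k + 1) ^ 2 - (k + 1) + 1) / (12 * (k + 1) * k * n) with hy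
  set x := y + (1 / M - 1 / (M + 1)) with hx
  have hyu : 2 / M ≤ y := by
    rw [hy, hM, div_le_div_iff₀ (by positivity) (by positivity)]
    have : 0 ≤ (k + 1) * n * ((k - 1) ^ 2 + k) := by positivity
    nlinarith
  have hδ : 0 < 1 / M - 1 / (M + 1) := by
    rw [sub_pos]; exact one_div_lt_one_div_of_lt (by positivity) (by linarith)
  have hδ2 : 1 / M - 1 / (M + 1) < 2 / M ^ 2 := by
    rw [div_sub_div _ _ (by positivity) (by positivity),
      div_lt_div_iff₀ (by positivity) (by positivity)]
    nlinarith
  have hy1 : y ≤ 1 := by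
    rw [hy, div_le_one (by positivity)]
    nlinarith [mul_le_mul hk hn zero_le_one (by linarith)]
  have hM2 : 2 / M ^ 2 ≤ 1 := by
    rw [div_le_one (by positivity)]; nlinarith
  have hexp : 1 / (12 * (n + k * n) + 1) - 1 / (12 * n) - 1 / (12 * (k * n)) = -x := by
    simp only [hx, hy, hM]
    field_simp
    ring
  rw [hexp]
  apply one_sub_lt_exp_neg_of_two_mul_sub_lt (by linarith) (by linarith)
  have hyy : (2 / M) ^ 2 ≤ x * y := by nlinarith
  have : (2 / M) ^ 2 = 2 * (2 / M ^ 2) := by field_simp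
  linarith

/-- Lower Robbins-type bound on the binomial coefficient `C(c·n, n)`:
for integers `c ≥ 2` and `n ≥ 1`,
`C(cn, n) > √(c / ((c−1)·2·π·n)) · (c^c / (c−1)^(c−1))^n · (1 − (c²−c+1)/(12·c·(c−1)·n))`. -/
theorem binomial_lower_bound (c n : ℕ) (hc : 2 ≤ c) (hn : 1 ≤ n) :
    Real.sqrt ((c : ℝ) / (((c : ℝ) - 1) * 2 * Real.pi * n)) *
        ((c : ℝ) ^ c / ((c : ℝ) - 1) ^ (c - 1)) ^ n *
        (1 - ((c : ℝ) ^ 2 - c + 1) / (12 * c * ((c : ℝ) - 1) * n)) <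
      ((c * n).choose n : ℝ) := by
  obtain ⟨k, rfl⟩ : ∃ k, c = k + 1 := ⟨c - 1, by omega⟩
  have hk : (1 : ℝ) ≤ k := by exact_mod_cast (by omega : 1 ≤ k)
  have hn' : (1 : ℝ) ≤ n := by exact_mod_cast hn
  have hsqrt : ((k : ℝ) + 1) / (k * 2 * π * n) = (n + k * n) / (2 * π * n * (k * n)) := by
    field_simp; ring
  have hpow : (((k : ℝ) + 1) ^ (k + 1) / k ^ k) ^ n =
      (n + k * n) ^ (n + k * n) / (n ^ n * (k * n) ^ (k * n)) := by
    rw [show (n : ℝ) + k * n = (k + 1) * n by ring, mul_pow, mul_pow, div_pow,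
      ← pow_mul, ← pow_mul, show (k + 1) * n = n + k * n by ring, pow_add (n : ℝ)]
    field_simp
  have hchoose :=
    robbins_lower_bound_le_add_choose (a := n) (b := k * n) (by omega) (by simp; omega)
  push_cast at hchoose
  rw [show (k + 1) * n = n + k * n by ring]
  push_cast [add_sub_cancel_right]
  rw [hsqrt, hpow]
  exact (mul_lt_mul_of_pos_left (one_sub_lt_exp_robbins_correction hk hn')
    (by positivity)).trans_le hchoose
end

section
/- Let S be a finite set of objects, let w : S → ℕ assign to each object a positive integer size, and let N = Σ_{y ∈ S} w(y). Let a, m, B be positive integers and fix x ∈ S. Let (h_y)_{y ∈ S} be independent random variables, each uniformly distributed on the bins {0, 1, …, a·m − 1}, and let R be uniformly distributed on {0, 1, …, B−1} and independent of (h_y). For each bin i let W_i = Σ_{y : h_y = i} w(y), and let s_i = R + Σ_{j < i} W_j be the starting position of bin i. Let X = ⌊(s_{h_x} + W_{h_x} − 1)/B⌋ − ⌊s_{h_x}/B⌋ + 1 be the number of size-B blocks intersected by the bin containing x. Then E[X] ≤ 1 + ( w(x) + N/(a·m) − 1 ) / B. -/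
/-!
Condition on the hashes. The bin of `x` is then a run of `W` consecutive positions starting at
`R + P`, where `P` and `W` depend only on the hashes; as the shift `R` runs over all `B`
residues, Hermite's identity `∑_{r < B} ⌊(n + r) / B⌋ = n` shows that the run meets on average
exactly `1 + (W - 1) / B` blocks. Hence `E[X] = 1 + (E[W] - 1) / B`, and by linearity
`E[W] = w(x) + ∑_{y ≠ x} w(y) P(h_y = h_x) = w(x) + (N - w(x)) / (a m)`.
-/

open MeasureTheory ProbabilityTheory

/-- Total weight of the objects hashed to bin `i` in outcome `ω`. -/
def binWeight {S : Type*} [Fintype S] {Ω : Type*} (w : S → ℕ) (h : S → Ω → ℕ)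
    (i : ℕ) (ω : Ω) : ℕ :=
  ∑ y ∈ Finset.univ.filter (fun y => h y ω = i), w y

/-- Starting position of bin `i` in the contiguous layout of the bins,
shifted by the random cyclic offset `R`. -/
def binStart {S : Type*} [Fintype S] {Ω : Type*} (w : S → ℕ) (h : S → Ω → ℕ)
    (R : Ω → ℕ) (i : ℕ) (ω : Ω) : ℕ :=
  R ω + ∑ j ∈ Finset.range i, binWeight w h j ω

open Finset

theorem Nat.sum_range_add_div {B : ℕ} (hB : 0 < B) (n : ℕ) :
    ∑ r ∈ range B, (n + r) / B = n := by
  induction n with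
  | zero => exact sum_eq_zero fun r hr => Nat.div_eq_of_lt (by simpa using hr)
  | succ n ih =>
    have shift := sum_range_succ' (fun r => (n + r) / B) B
    rw [sum_range_succ, ih, Nat.add_div_right n hB, add_zero] at shift
    simp only [add_right_comm n _ 1, ← add_assoc] at shift ⊢
    omega

/-- The number of size-`B` blocks met by the positions `s, …, s + W - 1` (for `W ≥ 1`). -/
def blockCount (B s W : ℕ) : ℕ := (s + W - 1) / B - s / B + 1

theorem sum_range_blockCount {B : ℕ} (hB : 0 < B) (p : ℕ) {W : ℕ} (hW : 1 ≤ W) :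
    ∑ r ∈ range B, blockCount B (r + p) W = W - 1 + B := by
  have hle : ∀ r ∈ range B, (r + p) / B ≤ (r + p + W - 1) / B :=
    fun r _ => Nat.div_le_div_right (by omega)
  have hstart : ∑ r ∈ range B, (r + p) / B = p := by
    simpa only [add_comm] using Nat.sum_range_add_div hB p
  have hend : ∑ r ∈ range B, (r + p + W - 1) / B = p + (W - 1) := by
    rw [← Nat.sum_range_add_div hB (p + (W - 1))]
    exact sum_congr rfl fun r _ => by congr 1; omega
  simp only [blockCount, sum_add_distrib, sum_tsub_distrib _ hle, hstart, hend, sum_const,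
    card_range, smul_eq_mul, mul_one]
  omega

theorem blockCount_le (B s W : ℕ) : blockCount B s W ≤ W + 2 := by
  have h1 : (s + W - 1) / B ≤ (s + W) / B := Nat.div_le_div_right (Nat.sub_le _ _)
  have h2 := Nat.add_div_le_div_add_div_add_one s W B
  have h3 := Nat.div_le_self W B
  unfold blockCount
  omega

theorem binWeight_self_eq_sum_indicator {S Ω : Type*} [Fintype S] (w : S → ℕ)
    (h : S → Ω → ℕ) (x : S) (ω : Ω) :
    (binWeight w h (h x ω) ω : ℝ)
      = ∑ y, (w y : ℝ) * {ω' | h y ω' = h x ω'}.indicator 1 ω := by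
  simp [binWeight, Set.indicator_apply, sum_filter]

theorem binWeight_le_sum {S Ω : Type*} [Fintype S] (w : S → ℕ) (h : S → Ω → ℕ) (i : ℕ)
    (ω : Ω) : binWeight w h i ω ≤ ∑ y, w y :=
  sum_le_sum_of_subset (filter_subset _ _)

section Probability

variable {Ω : Type*} [MeasurableSpace Ω] {μ : Measure Ω}

theorem integral_comp_indepFun_uniform {β : Type*} [MeasurableSpace β] {R : Ω → ℕ}
    {V : Ω → β} {B : ℕ} (hR : Measurable R) (hRV : IndepFun R V μ) (hRlt : ∀ ω, R ω < B)
    (hRunif : ∀ r < B, μ {ω | R ω = r} = ENNReal.ofReal (1 / B))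
    {f : ℕ → β → ℝ} (hf : ∀ r, Measurable (f r))
    (hfi : ∀ r, Integrable (fun ω => f r (V ω)) μ) :
    ∫ ω, f (R ω) (V ω) ∂μ = ∫ ω, (∑ r ∈ range B, f r (V ω)) / B ∂μ := by
  set E : ℕ → Set Ω := fun r => {ω | R ω = r}
  have hE : ∀ r, MeasurableSet (E r) := fun r => hR (measurableSet_singleton r)
  have hsplit : ∀ ω, f (R ω) (V ω) = ∑ r ∈ range B, (E r).indicator 1 ω * f r (V ω) := by
    intro ω
    simp only [E, Set.indicator_apply, Set.mem_ofPred_eq, Pi.one_apply, ite_mul, one_mul,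
      zero_mul, sum_ite_eq, mem_range, hRlt, if_true]
  have hterm : ∀ r ∈ range B,
      ∫ ω, (E r).indicator 1 ω * f r (V ω) ∂μ = (∫ ω, f r (V ω) ∂μ) / B := by
    intro r hr
    have hind : IndepFun (fun ω => (E r).indicator 1 ω) (fun ω => f r (V ω)) μ :=
      hRV.comp (φ := ({r} : Set ℕ).indicator (1 : ℕ → ℝ)) (measurable_of_countable _)
        (hf r)
    rw [hind.integral_fun_mul_eq_mul_integral
        (measurable_one.indicator (hE r)).aestronglyMeasurable (hfi r).aestronglyMeasurable,
      integral_indicator_one (hE r), measureReal_def,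
      hRunif r (mem_range.mp hr), ENNReal.toReal_ofReal (by positivity)]
    ring
  have hint : ∀ r ∈ range B, Integrable (fun ω => (E r).indicator 1 ω * f r (V ω)) μ :=
    fun r _ => (hfi r).bdd_mul (c := 1) (measurable_one.indicator (hE r)).aestronglyMeasurable
      (Filter.Eventually.of_forall fun ω => by
        by_cases h : ω ∈ E r <;> simp [h])
  rw [integral_congr_ae (Filter.Eventually.of_forall hsplit), integral_finsetSum _ hint,
    sum_congr rfl hterm, integral_div, integral_finsetSum _ fun r _ => hfi r, sum_div]

theorem measureReal_eq_of_indepFun_uniform [IsProbabilityMeasure μ] {X Y : Ω → ℕ}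
    {n : ℕ} (hX : Measurable X) (hY : Measurable Y) (hYX : IndepFun Y X μ)
    (hXlt : ∀ ω, X ω < n) (hYlt : ∀ ω, Y ω < n)
    (hYunif : ∀ i < n, μ {ω | Y ω = i} = ENNReal.ofReal (1 / n)) :
    μ.real {ω | X ω = Y ω} = 1 / n := by
  have hXY : MeasurableSet {ω | X ω = Y ω} := measurableSet_eq_fun hX hY
  rw [← integral_indicator_one hXY]
  calc ∫ ω, {ω | X ω = Y ω}.indicator 1 ω ∂μ
      = ∫ ω, ({Y ω} : Set ℕ).indicator (1 : ℕ → ℝ) (X ω) ∂μ := rfl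
    _ = ∫ ω, (∑ r ∈ range n, ({r} : Set ℕ).indicator (1 : ℕ → ℝ) (X ω)) / n ∂μ :=
        integral_comp_indepFun_uniform hY hYX hYlt hYunif (fun _ => measurable_of_countable _)
          fun r => ((integrable_const (1 : ℝ)).indicator
            (measurableSet_singleton r)).comp_measurable hX
    _ = 1 / n := by simp [hXlt]

theorem integral_binWeight_self {S : Type*} [Fintype S] [IsProbabilityMeasure μ]
    (w : S → ℕ) {h : S → Ω → ℕ} {n : ℕ} (hmeas : ∀ y, Measurable (h y))
    (hrange : ∀ y ω, h y ω < n)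
    (hunif : ∀ y, ∀ i < n, μ {ω | h y ω = i} = ENNReal.ofReal (1 / n))
    (hindep : Pairwise fun y z => IndepFun (h y) (h z) μ) (x : S) :
    ∫ ω, (binWeight w h (h x ω) ω : ℝ) ∂μ
      = w x + ((∑ y, w y : ℕ) - w x : ℝ) / n := by
  classical
  have hE : ∀ y, MeasurableSet {ω | h y ω = h x ω} := fun y =>
    measurableSet_eq_fun (hmeas y) (hmeas x)
  have hcollide : ∀ y ∈ univ.erase x, μ.real {ω | h y ω = h x ω} = 1 / n := fun y hy =>
    measureReal_eq_of_indepFun_uniform (hmeas y) (hmeas x) (hindep (ne_of_mem_erase hy).symm)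
      (hrange y) (hrange x) (hunif x)
  simp_rw [binWeight_self_eq_sum_indicator]
  rw [integral_finsetSum _ fun y _ => ((integrable_const 1).indicator (hE y)).const_mul _]
  simp_rw [integral_const_mul, integral_indicator_one (hE _)]
  rw [← add_sum_erase _ _ (mem_univ x), sum_congr rfl fun y hy => by rw [hcollide y hy],
    ← sum_mul, Nat.cast_sum, ← add_sum_erase _ _ (mem_univ x)]
  simp [div_eq_mul_inv]

theorem integral_blockCount_uniform_shift [IsProbabilityMeasure μ] {R P W : Ω → ℕ}
    {B : ℕ} (hB : 0 < B) (hR : Measurable R) (hP : Measurable P) (hW : Measurable W)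
    (hRPW : IndepFun R (fun ω => (P ω, W ω)) μ) (hRlt : ∀ ω, R ω < B)
    (hRunif : ∀ r < B, μ {ω | R ω = r} = ENNReal.ofReal (1 / B))
    (hW1 : ∀ ω, 1 ≤ W ω) (hWi : Integrable (fun ω => (W ω : ℝ)) μ) :
    ∫ ω, (blockCount B (R ω + P ω) (W ω) : ℝ) ∂μ
      = 1 + ((∫ ω, (W ω : ℝ) ∂μ) - 1) / B := by
  have hblocks : ∀ r, Integrable (fun ω => (blockCount B (r + P ω) (W ω) : ℝ)) μ := fun r =>
    (hWi.add (integrable_const 2)).mono'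
      ((measurable_of_countable fun pw : ℕ × ℕ => (blockCount B (r + pw.1) pw.2 : ℝ)).comp
        (hP.prodMk hW)).aestronglyMeasurable
      (Filter.Eventually.of_forall fun ω => by
        simpa using (Nat.cast_le (α := ℝ)).mpr (blockCount_le B (r + P ω) (W ω)))
  have haverage : ∀ ω, (∑ r ∈ range B, (blockCount B (r + P ω) (W ω) : ℝ)) / B
      = 1 + ((W ω : ℝ) - 1) / B := by
    intro ω
    rw [← Nat.cast_sum, sum_range_blockCount hB _ (hW1 ω), Nat.cast_add, Nat.cast_sub (hW1 ω)]
    field_simp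
    push_cast
    ring
  have hWi' : Integrable (fun ω => ((W ω : ℝ) - 1) / B) μ :=
    (hWi.sub (integrable_const 1)).div_const _
  calc ∫ ω, (blockCount B (R ω + P ω) (W ω) : ℝ) ∂μ
      = ∫ ω, (∑ r ∈ range B, (blockCount B (r + P ω) (W ω) : ℝ)) / B ∂μ :=
        integral_comp_indepFun_uniform (f := fun r pw => (blockCount B (r + pw.1) pw.2 : ℝ))
          hR hRPW hRlt hRunif (fun _ => measurable_of_countable _) hblocks
    _ = 1 + ((∫ ω, (W ω : ℝ) ∂μ) - 1) / B := by
        simp_rw [haverage]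
        rw [integral_add (integrable_const 1) hWi', integral_div,
          integral_sub hWi (integrable_const 1)]
        simp

end Probability

theorem expected_blocks_per_query_general
    {Ω : Type*} [MeasurableSpace Ω] (μ : Measure Ω) [IsProbabilityMeasure μ]
    {S : Type*} [Fintype S] (w : S → ℕ) (hw : ∀ y, 1 ≤ w y)
    (N : ℕ) (hN : N = ∑ y, w y)
    (a m B : ℕ) (hB : 0 < B) (x : S)
    (h : S → Ω → ℕ) (hmeas : ∀ y, Measurable (h y))
    (hrange : ∀ y ω, h y ω < a * m)
    (hunif : ∀ y, ∀ i < a * m, μ {ω | h y ω = i} = ENNReal.ofReal (1 / (a * m)))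
    (hindep : iIndepFun h μ)
    (R : Ω → ℕ) (hRmeas : Measurable R) (hRlt : ∀ ω, R ω < B)
    (hRunif : ∀ r < B, μ {ω | R ω = r} = ENNReal.ofReal (1 / B))
    (hRindep : IndepFun R (fun ω y => h y ω) μ) :
    ∫ ω, (((binStart w h R (h x ω) ω + binWeight w h (h x ω) ω - 1) / B
        - binStart w h R (h x ω) ω / B + 1 : ℕ) : ℝ) ∂μ
      ≤ 1 + ((w x : ℝ) + (N : ℝ) / (a * m) - 1) / B := by
  -- `binWeight w coord i (fun y => h y ω)` unfolds to `binWeight w h i ω`, so the start and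
  -- the weight of the bin of `x` are functions of the hash vector, which is independent of `R`.
  let coord : S → (S → ℕ) → ℕ := fun y v => v y
  have hlayout : Measurable fun v : S → ℕ =>
      (∑ j ∈ range (v x), binWeight w coord j v, binWeight w coord (v x) v) :=
    measurable_of_countable _
  have hV : Measurable fun ω y => h y ω := measurable_pi_lambda _ hmeas
  have hPW := hlayout.comp hV
  have hW1 : ∀ ω, 1 ≤ binWeight w h (h x ω) ω := fun ω =>
    (hw x).trans (single_le_sum (fun _ _ => Nat.zero_le _) (by simp))
  have hWi : Integrable (fun ω => (binWeight w h (h x ω) ω : ℝ)) μ :=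
    .of_bound (measurable_from_nat.comp (measurable_snd.comp hPW)).aestronglyMeasurable N
      (Filter.Eventually.of_forall fun ω => by
        rw [Real.norm_natCast]; exact_mod_cast hN ▸ binWeight_le_sum w h (h x ω) ω)
  calc ∫ ω, (blockCount B (binStart w h R (h x ω) ω) (binWeight w h (h x ω) ω) : ℝ) ∂μ
      = 1 + ((∫ ω, (binWeight w h (h x ω) ω : ℝ) ∂μ) - 1) / B :=
        integral_blockCount_uniform_shift hB hRmeas (measurable_fst.comp hPW)
          (measurable_snd.comp hPW) (hRindep.comp measurable_id hlayout) hRlt hRunif hW1 hWi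
    _ = 1 + ((w x : ℝ) + (N - w x) / (a * m) - 1) / B := by
        rw [integral_binWeight_self w hmeas hrange (by exact_mod_cast hunif)
          (fun y z hyz => hindep.indepFun hyz) x, hN]
        push_cast
        rfl
    _ ≤ 1 + ((w x : ℝ) + (N : ℝ) / (a * m) - 1) / B := by
        gcongr
        linarith [(w x).cast_nonneg (α := ℝ)]

/-- The expected number of size-`B` blocks intersected by the bin containing a
fixed object `x` is at most `1 + (w(x) + N/(a·m) − 1)/B`, where the objects are
hashed independently and uniformly to `a·m` bins, laid out contiguously, and
the layout is shifted by an independent uniform offset `R ∈ {0, …, B−1}`. -/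
theorem expected_blocks_per_query
    {Ω : Type*} [MeasurableSpace Ω] (μ : Measure Ω) [IsProbabilityMeasure μ]
    {S : Type*} [Fintype S] (w : S → ℕ) (hw : ∀ y, 1 ≤ w y)
    (N : ℕ) (hN : N = ∑ y, w y)
    (a m B : ℕ) (ha : 0 < a) (hm : 0 < m) (hB : 0 < B) (x : S)
    (h : S → Ω → ℕ) (hmeas : ∀ y, Measurable (h y))
    (hrange : ∀ y ω, h y ω < a * m)
    (hunif : ∀ y, ∀ i < a * m, μ {ω | h y ω = i} = ENNReal.ofReal (1 / (a * m)))
    (hindep : iIndepFun h μ)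
    (R : Ω → ℕ) (hRmeas : Measurable R) (hRlt : ∀ ω, R ω < B)
    (hRunif : ∀ r < B, μ {ω | R ω = r} = ENNReal.ofReal (1 / B))
    (hRindep : IndepFun R (fun ω y => h y ω) μ) :
    ∫ ω, (((binStart w h R (h x ω) ω + binWeight w h (h x ω) ω - 1) / B
        - binStart w h R (h x ω) ω / B + 1 : ℕ) : ℝ) ∂μ
      ≤ 1 + ((w x : ℝ) + (N : ℝ) / (a * m) - 1) / B :=
  expected_blocks_per_query_general μ w hw N hN a m B hB x h hmeas hrange hunif hindep R hRmeas hRlt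
    hRunif hRindep
end
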